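/- Renormalization preserves the weight of the redistribution point: the sum of the renormalized weights over all depth-(r+e) descendants of the d-redistribution point ρ equals the original weight h(ρ), for every e ≥ 0. -/

import Mathlib

/-- An abstract rooted tree: every vertex has a parent (the root is its own
parent), a depth (distance to the root), every vertex is connected to the
root, and each depth level is finite (finitely-branching). -/
structure RTree (V : Type) where
  root : V
  parent : V → V
  depth : V → ℕ
  parent_root : parent root = root
  depth_root : depth root = 0
  depth_parent : ∀ v : V, v ≠ root → depth (parent v) + 1 = depth v
  ancestor_root : ∀ v : V, parent^[depth v] v = root
  level_finite : ∀ d : ℕ, {v : V | depth v = d}.Finite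

namespace RTree

variable {V : Type}

/-- The children of a vertex. -/
def children (T : RTree V) (v : V) : Set V :=
  {u : V | T.parent u = v ∧ u ≠ T.root}

/-- The descendants of `v` that lie `e` levels below `v`. -/
def descAt (T : RTree V) (e : ℕ) (v : V) : Set V :=
  {u : V | T.parent^[e] u = v ∧ T.depth u = T.depth v + e}

end RTree

/-- A coherent weight function (a Hintikka tree): the root gets weight 1 and
the weight of each vertex is the sum of the weights of its children. -/
def Coherent {V : Type} (T : RTree V) (h : V → ℝ) : Prop :=
  h T.root = 1 ∧ ∀ v : V, h v = ∑ᶠ u ∈ T.children v, h u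
open scoped Classical

/-- `u` is an ancestor of (or equal to) `v`. -/
def AncOrEq {V : Type} (T : RTree V) (u v : V) : Prop :=
  ∃ k : ℕ, T.parent^[k] v = u ∧ T.depth v = T.depth u + k

/-- `u` is a proper descendant of `ρ`. -/
def ProperDesc {V : Type} (T : RTree V) (ρ u : V) : Prop :=
  ∃ j : ℕ, 0 < j ∧ T.parent^[j] u = ρ ∧ T.depth u = T.depth ρ + j

/-- `u` is supported (relative to weights `h`, target depth `D`, and the
refuted depth-`D` vertex `w`): there is a chain from `u` down to some
depth-`D` vertex `v ≠ w` along which `h` is positive (for vertices deeper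
than `D`, we require the ancestor at depth `D` to avoid `w` and to carry
positive weight). -/
def Supported {V : Type} (T : RTree V) (h : V → ℝ) (D : ℕ) (w : V) (u : V) : Prop :=
  if T.depth u ≤ D then
    ∃ v : V, T.depth v = D ∧ v ≠ w ∧ T.parent^[D - T.depth u] v = u ∧
      ∀ k : ℕ, k ≤ D - T.depth u → 0 < h (T.parent^[k] v)
  else
    T.parent^[T.depth u - D] u ≠ w ∧ 0 < h (T.parent^[T.depth u - D] u)

/-- The total renormalization constant: sum of `h` over the children of `ρ`. -/
noncomputable def Ztot {V : Type} (T : RTree V) (h : V → ℝ) (ρ : V) : ℝ :=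
  ∑ᶠ u ∈ T.children ρ, h u

/-- The positive renormalization constant: sum of `h` over the supported
children of `ρ`. -/
noncomputable def Zplus {V : Type} (T : RTree V) (h : V → ℝ) (D : ℕ) (w ρ : V) : ℝ :=
  ∑ᶠ u ∈ T.children ρ ∩ {u : V | Supported T h D w u}, h u

/-- Renormalization of `h` refuting the depth-`D` vertex `w`, with
redistribution point `ρ`: zero the unsupported descendants of `ρ`, rescale
the supported descendants of `ρ` by `Z/Z⁺`, and leave everything else
unchanged. -/
noncomputable def renorm {V : Type} (T : RTree V) (h : V → ℝ) (D : ℕ) (w ρ : V) : V → ℝ :=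
  fun u =>
    if ProperDesc T ρ u then
      if Supported T h D w u then (Ztot T h ρ / Zplus T h D w ρ) * h u else 0
    else h u

/-- `ρ` is the redistribution point for refuting the depth-`D` vertex `w`:
it is the deepest ancestor of `w` having a supported child. -/
def IsRedistPoint {V : Type} (T : RTree V) (h : V → ℝ) (D : ℕ) (w ρ : V) : Prop :=
  AncOrEq T ρ w ∧ (∃ c ∈ T.children ρ, Supported T h D w c) ∧
    ∀ u : V, AncOrEq T u w → T.depth ρ < T.depth u →
      ∀ c ∈ T.children u, ¬ Supported T h D w c

/-!
Below `ρ` the renormalized weight is again coherent. An unsupported vertex has only unsupported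
children, and a supported proper descendant `u` of `ρ` has only supported children of positive
weight: otherwise a positive chain from such a child ends at `w`, making `u` an ancestor of `w`
deeper than `ρ` with a supported child, against the choice of `ρ`. So rescaling by `Z / Z⁺`
commutes with summing over children, the level sums below `ρ` are constant from level one on,
and at level one the sum is `(Z / Z⁺) · Z⁺ = Z = h ρ`.
-/

namespace RTree

variable {V : Type} (T : RTree V)

theorem depth_of_mem_children {u c : V} (hc : c ∈ T.children u) :
    T.depth c = T.depth u + 1 := by
  rw [← T.depth_parent c hc.2, hc.1]

theorem children_finite (u : V) : (T.children u).Finite :=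
  (T.level_finite (T.depth u + 1)).subset fun _ hc => T.depth_of_mem_children hc

theorem descAt_finite (e : ℕ) (v : V) : (T.descAt e v).Finite :=
  (T.level_finite (T.depth v + e)).subset fun _ hu => hu.2

theorem descAt_zero (v : V) : T.descAt 0 v = {v} := by
  ext u
  simp only [descAt, Function.iterate_zero_apply, add_zero, Set.mem_ofPred_eq,
    Set.mem_singleton_iff, and_iff_left_iff_imp]
  rintro rfl
  rfl

theorem descAt_succ (e : ℕ) (v : V) :
    T.descAt (e + 1) v = ⋃ u ∈ T.descAt e v, T.children u := by
  ext x
  simp only [Set.mem_iUnion, exists_prop]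
  constructor
  · rintro ⟨hpx, hdx⟩
    have hx : x ≠ T.root := fun hr => by rw [hr, T.depth_root] at hdx; omega
    have := T.depth_parent x hx
    exact ⟨T.parent x, ⟨by rwa [← Function.iterate_succ_apply], by omega⟩, rfl, hx⟩
  · rintro ⟨u, ⟨hpu, hdu⟩, hc⟩
    refine ⟨by rw [Function.iterate_succ_apply, hc.1, hpu], ?_⟩
    rw [T.depth_of_mem_children hc, hdu]
    omega

theorem children_subset_descAt_succ {e : ℕ} {v u : V} (hu : u ∈ T.descAt e v) :
    T.children u ⊆ T.descAt (e + 1) v := by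
  rw [descAt_succ]
  exact Set.subset_biUnion_of_mem (u := T.children) hu

theorem descAt_one (v : V) : T.descAt 1 v = T.children v := by
  rw [descAt_succ, descAt_zero, Set.biUnion_singleton]

theorem mem_descAt_succ_of_mem_children {u c x : V} {n : ℕ} (hc : c ∈ T.children u)
    (hx : x ∈ T.descAt n c) : x ∈ T.descAt (n + 1) u :=
  ⟨by rw [Function.iterate_succ_apply', hx.1, hc.1], by
    rw [hx.2, T.depth_of_mem_children hc]; omega⟩

theorem exists_mem_children_of_mem_descAt_succ {u : V} :
    ∀ {n : ℕ} {x : V}, x ∈ T.descAt (n + 1) u → ∃ c ∈ T.children u, x ∈ T.descAt n c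
  | 0, x, hx => ⟨x, by rwa [← descAt_one], by rw [descAt_zero]; rfl⟩
  | n + 1, x, hx => by
    rw [descAt_succ] at hx
    obtain ⟨y, hy, hxy⟩ := Set.mem_iUnion₂.1 hx
    obtain ⟨c, hc, hyc⟩ := exists_mem_children_of_mem_descAt_succ hy
    exact ⟨c, hc, T.children_subset_descAt_succ hyc hxy⟩

theorem pairwiseDisjoint_children (s : Set V) : s.PairwiseDisjoint T.children :=
  fun _ _ _ _ hne => Set.disjoint_left.2 fun _ hc hc' => hne (hc.1.symm.trans hc'.1)

theorem finsum_mem_descAt_succ {M : Type*} [AddCommMonoid M] (g : V → M) (e : ℕ) (v : V) :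
    ∑ᶠ u ∈ T.descAt (e + 1) v, g u = ∑ᶠ u ∈ T.descAt e v, ∑ᶠ c ∈ T.children u, g c := by
  rw [descAt_succ]
  exact finsum_mem_biUnion (T.pairwiseDisjoint_children _) (T.descAt_finite e v)
    fun u _ => T.children_finite u

end RTree

section

variable {V : Type} {T : RTree V}

theorem not_properDesc_self (v : V) : ¬ ProperDesc T v v := by
  rintro ⟨j, hj, -, hd⟩
  omega

theorem ProperDesc.of_mem_children {ρ u c : V} (hu : ProperDesc T ρ u)
    (hc : c ∈ T.children u) : ProperDesc T ρ c := by
  obtain ⟨j, -, hu⟩ := hu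
  exact ⟨j + 1, j.succ_pos, T.children_subset_descAt_succ hu hc⟩

variable {h : V → ℝ}

theorem Coherent.le_of_mem_children (hcoh : Coherent T h) (hnn : ∀ v, 0 ≤ h v) {u c : V}
    (hc : c ∈ T.children u) : h c ≤ h u := by
  rw [hcoh.2 u, finsum_mem_eq_finite_toFinset_sum _ (T.children_finite u)]
  exact Finset.single_le_sum (fun i _ => hnn i) ((T.children_finite u).mem_toFinset.2 hc)

theorem Coherent.exists_pos_child (hcoh : Coherent T h) (hnn : ∀ v, 0 ≤ h v) {u : V}
    (hu : 0 < h u) : ∃ c ∈ T.children u, 0 < h c := by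
  by_contra! hno
  refine hu.ne' ((hcoh.2 u).trans (finsum_mem_eq_zero_of_forall_eq_zero fun c hc => ?_))
  exact le_antisymm (hno c hc) (hnn c)

theorem Coherent.exists_pos_chain (hcoh : Coherent T h) (hnn : ∀ v, 0 ≤ h v) {u : V}
    (hu : 0 < h u) : ∀ n : ℕ, ∃ v ∈ T.descAt n u, ∀ k ≤ n, 0 < h (T.parent^[k] v)
  | 0 => ⟨u, by rw [T.descAt_zero]; rfl, fun k hk => by rwa [Nat.le_zero.1 hk]⟩
  | n + 1 => by
    obtain ⟨v, hv, hpos⟩ := hcoh.exists_pos_chain hnn hu n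
    obtain ⟨c, hc, hcpos⟩ := hcoh.exists_pos_child hnn (hpos 0 n.zero_le)
    refine ⟨c, T.children_subset_descAt_succ hv hc, ?_⟩
    rintro (_ | k) hk
    · exact hcpos
    · rw [Function.iterate_succ_apply, hc.1]
      exact hpos k (by omega)

variable {D : ℕ} {w : V}

theorem supported_iff_of_depth_le {u : V} (hD : T.depth u ≤ D) :
    Supported T h D w u ↔ ∃ v ∈ T.descAt (D - T.depth u) u,
      v ≠ w ∧ ∀ k ≤ D - T.depth u, 0 < h (T.parent^[k] v) := by
  rw [Supported, if_pos hD]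
  exact exists_congr fun v =>
    ⟨fun ⟨_, hvw, hvu, hpos⟩ => ⟨⟨hvu, by omega⟩, hvw, hpos⟩,
      fun ⟨⟨hvu, _⟩, hvw, hpos⟩ => ⟨by omega, hvw, hvu, hpos⟩⟩

theorem supported_iff_of_le_depth {u : V} (hD : D ≤ T.depth u) :
    Supported T h D w u ↔
      T.parent^[T.depth u - D] u ≠ w ∧ 0 < h (T.parent^[T.depth u - D] u) := by
  rcases hD.eq_or_lt with hD | hD
  · rw [supported_iff_of_depth_le hD.ge, ← hD, Nat.sub_self, T.descAt_zero]
    simp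
  · rw [Supported, if_neg hD.not_ge]

theorem supported_iff_of_mem_children {u c : V} (hD : D ≤ T.depth u) (hc : c ∈ T.children u) :
    Supported T h D w c ↔ Supported T h D w u := by
  have hdc := T.depth_of_mem_children hc
  rw [supported_iff_of_le_depth (by omega), supported_iff_of_le_depth hD,
    show T.depth c - D = T.depth u - D + 1 by omega, Function.iterate_succ_apply, hc.1]

theorem Supported.of_mem_children (hcoh : Coherent T h) (hnn : ∀ v, 0 ≤ h v) {u c : V}
    (hc : c ∈ T.children u) (hs : Supported T h D w c) : Supported T h D w u := by
  have hdc := T.depth_of_mem_children hc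
  rcases le_or_gt D (T.depth u) with hD | hD
  · exact (supported_iff_of_mem_children hD hc).1 hs
  obtain ⟨v, hv, hvw, hpos⟩ := (supported_iff_of_depth_le (by omega)).1 hs
  have hcpos : 0 < h c := hv.1 ▸ hpos _ le_rfl
  have hn : D - T.depth u = D - T.depth c + 1 := by omega
  refine (supported_iff_of_depth_le hD.le).2
    ⟨v, hn ▸ T.mem_descAt_succ_of_mem_children hc hv, hvw, fun k hk => ?_⟩
  rcases hk.lt_or_eq with hk | rfl
  · exact hpos k (by omega)
  · rw [hn, Function.iterate_succ_apply', hv.1, hc.1]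
    exact hcpos.trans_le (hcoh.le_of_mem_children hnn hc)

theorem Supported.exists_mem_children {u : V} (hD : T.depth u < D)
    (hs : Supported T h D w u) : ∃ c ∈ T.children u, Supported T h D w c := by
  obtain ⟨v, hv, hvw, hpos⟩ := (supported_iff_of_depth_le hD.le).1 hs
  obtain ⟨n, hn⟩ : ∃ n, D - T.depth u = n + 1 := ⟨D - T.depth u - 1, by omega⟩
  rw [hn] at hv hpos
  obtain ⟨c, hc, hvc⟩ := T.exists_mem_children_of_mem_descAt_succ hv
  have hdc := T.depth_of_mem_children hc
  refine ⟨c, hc, (supported_iff_of_depth_le (by omega)).2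
    ⟨v, ?_, hvw, fun k hk => hpos k (by omega)⟩⟩
  rwa [show D - T.depth c = n by omega]

variable {ρ : V}

theorem IsRedistPoint.supported_of_mem_children (hρ : IsRedistPoint T h D w ρ)
    (hcoh : Coherent T h) (hnn : ∀ v, 0 ≤ h v) {u c : V} (hu : ProperDesc T ρ u)
    (hs : Supported T h D w u) (hc : c ∈ T.children u) (hpos : 0 < h c) :
    Supported T h D w c := by
  have hdc := T.depth_of_mem_children hc
  rcases le_or_gt D (T.depth u) with hD | hD
  · exact (supported_iff_of_mem_children hD hc).2 hs
  obtain ⟨v, hv, hvpos⟩ := hcoh.exists_pos_chain hnn hpos (D - T.depth c)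
  refine (supported_iff_of_depth_le (by omega)).2 ⟨v, hv, fun hvw => ?_, hvpos⟩
  obtain ⟨j, hj, -, hdu⟩ := hu
  have hanc : AncOrEq T u w := ⟨_, hvw ▸ T.mem_descAt_succ_of_mem_children hc hv⟩
  obtain ⟨c', hc', hs'⟩ := hs.exists_mem_children hD
  exact hρ.2.2 u hanc (by omega) c' hc' hs'

theorem renorm_of_properDesc {u : V} (hu : ProperDesc T ρ u) :
    renorm T h D w ρ u =
      if Supported T h D w u then Ztot T h ρ / Zplus T h D w ρ * h u else 0 :=
  if_pos hu

theorem renorm_of_not_properDesc {u : V} (hu : ¬ ProperDesc T ρ u) :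
    renorm T h D w ρ u = h u :=
  if_neg hu

theorem IsRedistPoint.renorm_eq_finsum_children (hρ : IsRedistPoint T h D w ρ)
    (hcoh : Coherent T h) (hnn : ∀ v, 0 ≤ h v) {u : V} (hu : ProperDesc T ρ u) :
    renorm T h D w ρ u = ∑ᶠ c ∈ T.children u, renorm T h D w ρ c := by
  by_cases hs : Supported T h D w u
  · have hrescale : ∀ c ∈ T.children u,
        renorm T h D w ρ c = Ztot T h ρ / Zplus T h D w ρ * h c := by
      intro c hc
      rw [renorm_of_properDesc (hu.of_mem_children hc)]
      split_ifs with hcs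
      · rfl
      · have hc0 : h c = 0 := by
          by_contra hne
          exact hcs (hρ.supported_of_mem_children hcoh hnn hu hs hc ((hnn c).lt_of_ne' hne))
        rw [hc0, mul_zero]
    rw [finsum_mem_congr rfl hrescale, ← mul_finsum_mem, ← hcoh.2, renorm_of_properDesc hu,
      if_pos hs]
  · rw [renorm_of_properDesc hu, if_neg hs, finsum_mem_eq_zero_of_forall_eq_zero]
    intro c hc
    rw [renorm_of_properDesc (hu.of_mem_children hc),
      if_neg fun hcs => hs (hcs.of_mem_children hcoh hnn hc)]

theorem finsum_mem_children_renorm (hcoh : Coherent T h) (hZp : 0 < Zplus T h D w ρ) :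
    ∑ᶠ c ∈ T.children ρ, renorm T h D w ρ c = h ρ := by
  have hind : ∀ c ∈ T.children ρ, renorm T h D w ρ c =
      {c | Supported T h D w c}.indicator (fun c => Ztot T h ρ / Zplus T h D w ρ * h c) c := by
    intro c hc
    rw [← T.descAt_one] at hc
    rw [renorm_of_properDesc ⟨1, one_pos, hc⟩]
    rfl
  rw [finsum_mem_congr rfl hind, finsum_mem_def, Set.indicator_indicator, ← finsum_mem_def,
    ← mul_finsum_mem, ← Zplus.eq_1, div_mul_cancel₀ _ hZp.ne', Ztot, ← hcoh.2]

end

theorem stmt5_general {V : Type} (T : RTree V) (h : V → ℝ) (D : ℕ) (w ρ : V)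
    (hcoh : Coherent T h) (hnn : ∀ v : V, 0 ≤ h v)
    (hρ : IsRedistPoint T h D w ρ)
    (hZp : 0 < Zplus T h D w ρ) :
    ∀ e : ℕ, (∑ᶠ u ∈ T.descAt e ρ, renorm T h D w ρ u) = h ρ := by
  intro e
  induction e with
  | zero =>
    rw [T.descAt_zero, finsum_mem_singleton, renorm_of_not_properDesc (not_properDesc_self ρ)]
  | succ e ih =>
    rcases e with _ | e
    · rw [T.descAt_one]
      exact finsum_mem_children_renorm hcoh hZp
    · rw [T.finsum_mem_descAt_succ, ← ih]
      exact finsum_mem_congr rfl fun u hu =>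
        (hρ.renorm_eq_finsum_children hcoh hnn ⟨e + 1, e.succ_pos, hu⟩).symm

/-- Renormalization preserves the weight of the redistribution point: the sum
of the renormalized weights over all descendants of `ρ` lying `e` levels below
`ρ` equals the original weight `h ρ`, for every `e ≥ 0`. -/
theorem stmt5 {V : Type} (T : RTree V) (h : V → ℝ) (D : ℕ) (w ρ : V)
    (hcoh : Coherent T h) (hnn : ∀ v : V, 0 ≤ h v)
    (hwD : T.depth w = D)
    (hρ : IsRedistPoint T h D w ρ)
    (hZp : 0 < Zplus T h D w ρ) :
    ∀ e : ℕ, (∑ᶠ u ∈ T.descAt e ρ, renorm T h D w ρ u) = h ρ :=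
  stmt5_general T h D w ρ hcoh hnn hρ hZp
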